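/- arXiv:1202.1854 — 3 statements merged into one kernel-verified Lean document; each statement's English description precedes it below -/
import Mathlib

section
/- For the polynomial p_{L/2}(x) = ∑_{n=0}^{L/2−1} C(L/2−1+n, n) xⁿ with L even, the identity p_{L/2}(x) = ∑_{k=0}^{L/2−1} C(L−1, k) x^k (1−x)^{L/2−1−k} holds for all real x. -/
open Finset

lemma pascal_sum_aux (N t : ℕ) (g : ℕ → ℝ) :
    ∑ k ∈ range (t+1), ((N+1).choose k : ℝ) * g k
      = ∑ k ∈ range (t+1), (N.choose k : ℝ) * g k + ∑ k ∈ range t, (N.choose k : ℝ) * g (k+1) := by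
  rw [Finset.sum_range_succ' (fun k => ((N+1).choose k : ℝ) * g k) t,
      Finset.sum_range_succ' (fun k => ((N).choose k : ℝ) * g k) t]
  have : ∀ k, (((N+1).choose (k+1) : ℝ)) * g (k+1)
      = (N.choose k : ℝ) * g (k+1) + (N.choose (k+1) : ℝ) * g (k+1) := by
    intro k
    rw [Nat.choose_succ_succ]
    push_cast
    ring
  simp only [this, Finset.sum_add_distrib]
  simp [Nat.choose_zero_right]
  ring

lemma step_left_aux (m : ℕ) (x : ℝ) :
    (1-x) * ∑ n ∈ range (m+2), ((m+1+n).choose n : ℝ) * x^n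
      = (∑ n ∈ range (m+1), ((m+n).choose n : ℝ) * x^n)
        + ((2*m+1).choose (m+1) : ℝ) * x^(m+1) - ((2*m+2).choose (m+1) : ℝ) * x^(m+2) := by
  have hxP : x * ∑ n ∈ range (m+2), ((m+1+n).choose n : ℝ) * x^n
      = (∑ n ∈ range (m+1), ((m+1+n).choose n : ℝ) * x^(n+1))
        + ((2*m+2).choose (m+1) : ℝ) * x^(m+2) := by
    rw [Finset.mul_sum, Finset.sum_range_succ]
    congr 1
    · exact Finset.sum_congr rfl (fun n _ => by ring)
    · have : m+1+(m+1) = 2*m+2 := by ring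
      rw [this]; ring
  have hcong : ∑ k ∈ range (m+1), ((m+1+(k+1)).choose (k+1) : ℝ) * x^(k+1)
      = ∑ n ∈ range (m+1), (((m+1+n).choose n : ℝ) + ((m+n+1).choose (n+1) : ℝ)) * x^(n+1) := by
    refine Finset.sum_congr rfl (fun n _ => ?_)
    have : (m+1+(n+1)).choose (n+1) = (m+n+1).choose n + (m+n+1).choose (n+1) := by
      have h1 : m+1+(n+1) = (m+n+1)+1 := by ring
      rw [h1, Nat.choose_succ_succ]
    rw [this]
    have h2 : (m+n+1).choose n = (m+1+n).choose n := by rw [show m+n+1 = m+1+n by ring]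
    push_cast [h2]
    ring
  have hP : ∑ n ∈ range (m+2), ((m+1+n).choose n : ℝ) * x^n
      = 1 + ∑ n ∈ range (m+1), (((m+1+n).choose n : ℝ) + ((m+n+1).choose (n+1) : ℝ)) * x^(n+1) := by
    rw [Finset.sum_range_succ' (fun n => ((m+1+n).choose n : ℝ) * x^n) (m+1), hcong]
    simp
    ring
  have hp2 : (1:ℝ) + ∑ n ∈ range (m+1), ((m+n+1).choose (n+1) : ℝ) * x^(n+1)
      = (∑ n ∈ range (m+1), ((m+n).choose n : ℝ) * x^n) + ((2*m+1).choose (m+1) : ℝ) * x^(m+1) := by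
    have h := (Finset.sum_range_succ' (fun n => ((m+n).choose n : ℝ) * x^n) (m+1)).symm
    rw [Finset.sum_range_succ (fun n => ((m+n).choose n : ℝ) * x^n) (m+1)] at h
    simp only [Nat.choose_zero_right, pow_zero, Nat.cast_one, mul_one, Nat.add_zero] at h ⊢
    rw [show m+(m+1) = 2*m+1 by ring] at h
    rw [add_comm (1:ℝ) _]
    exact h
  calc (1-x) * ∑ n ∈ range (m+2), ((m+1+n).choose n : ℝ) * x^n
      = (∑ n ∈ range (m+2), ((m+1+n).choose n : ℝ) * x^n)
        - x * ∑ n ∈ range (m+2), ((m+1+n).choose n : ℝ) * x^n := by ring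
    _ = _ := by
        rw [hxP, hP]
        simp only [add_mul, Finset.sum_add_distrib]
        rw [show (1:ℝ) + (∑ n ∈ range (m+1), ((m+1+n).choose n : ℝ) * x^(n+1)
              + ∑ n ∈ range (m+1), ((m+n+1).choose (n+1) : ℝ) * x^(n+1))
            - (∑ n ∈ range (m+1), ((m+1+n).choose n : ℝ) * x^(n+1)
              + ((2*m+2).choose (m+1) : ℝ) * x^(m+2))
          = ((1:ℝ) + ∑ n ∈ range (m+1), ((m+n+1).choose (n+1) : ℝ) * x^(n+1))
              - ((2*m+2).choose (m+1) : ℝ) * x^(m+2) by ring]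
        rw [hp2]

lemma step_right_aux (m : ℕ) (x : ℝ) :
    ∑ k ∈ range (m+2), ((2*m+3).choose k : ℝ) * (x^k * (1-x)^(2*m+3-k))
      = (∑ k ∈ range (m+1), ((2*m+1).choose k : ℝ) * (x^k * (1-x)^(2*m+1-k)))
        + ((2*m+1).choose m : ℝ) * x^(m+1) * (1-x)^(m+1) * (1-2*x) := by
  set B := ∑ k ∈ range (m+1), ((2*m+1).choose k : ℝ) * (x^k * (1-x)^(2*m+1-k)) with hB
  set g : ℕ → ℝ := fun k => x^k * (1-x)^(2*m+3-k) with hg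
  have e1 : ∑ k ∈ range (m+2), ((2*m+3).choose k : ℝ) * g k
      = ∑ k ∈ range (m+2), ((2*m+2).choose k : ℝ) * g k
        + ∑ k ∈ range (m+1), ((2*m+2).choose k : ℝ) * g (k+1) :=
    pascal_sum_aux (2*m+2) (m+1) g
  have e2 : ∑ k ∈ range (m+2), ((2*m+2).choose k : ℝ) * g k
      = ∑ k ∈ range (m+2), ((2*m+1).choose k : ℝ) * g k
        + ∑ k ∈ range (m+1), ((2*m+1).choose k : ℝ) * g (k+1) := pascal_sum_aux (2*m+1) (m+1) g
  have e3 : ∑ k ∈ range (m+1), ((2*m+2).choose k : ℝ) * g (k+1)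
      = ∑ k ∈ range (m+1), ((2*m+1).choose k : ℝ) * g (k+1)
        + ∑ k ∈ range m, ((2*m+1).choose k : ℝ) * g (k+2) :=
    pascal_sum_aux (2*m+1) m (fun k => g (k+1))
  have hS0 : ∑ k ∈ range (m+2), ((2*m+1).choose k : ℝ) * g k
      = (1-x)^2 * B + ((2*m+1).choose (m+1) : ℝ) * (x^(m+1) * (1-x)^(m+2)) := by
    rw [Finset.sum_range_succ]
    congr 1
    · rw [hB, Finset.mul_sum]
      refine Finset.sum_congr rfl (fun k hk => ?_)
      have hk' : k < m+1 := Finset.mem_range.mp hk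
      rw [hg]
      simp only []
      rw [show 2*m+3-k = (2*m+1-k)+2 by omega, pow_add]
      ring
    · rw [hg]
      simp only []
      rw [show 2*m+3-(m+1) = m+2 by omega]
  have hS1 : ∑ k ∈ range (m+1), ((2*m+1).choose k : ℝ) * g (k+1) = x*(1-x) * B := by
    rw [hB, Finset.mul_sum]
    refine Finset.sum_congr rfl (fun k hk => ?_)
    have hk' : k < m+1 := Finset.mem_range.mp hk
    rw [hg]
    simp only []
    rw [show 2*m+3-(k+1) = (2*m+1-k)+1 by omega, pow_add, pow_succ]
    ring
  have hS2 : ∑ k ∈ range m, ((2*m+1).choose k : ℝ) * g (k+2)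
      = x^2 * (B - ((2*m+1).choose m : ℝ) * (x^m * (1-x)^(m+1))) := by
    have hBsplit : B = (∑ k ∈ range m, ((2*m+1).choose k : ℝ) * (x^k * (1-x)^(2*m+1-k)))
        + ((2*m+1).choose m : ℝ) * (x^m * (1-x)^(m+1)) := by
      rw [hB, Finset.sum_range_succ, show 2*m+1-m = m+1 by omega]
    rw [hBsplit]
    rw [show (∑ k ∈ range m, ((2*m+1).choose k : ℝ) * (x^k * (1-x)^(2*m+1-k)))
        + ((2*m+1).choose m : ℝ) * (x^m * (1-x)^(m+1))
        - ((2*m+1).choose m : ℝ) * (x^m * (1-x)^(m+1))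
      = ∑ k ∈ range m, ((2*m+1).choose k : ℝ) * (x^k * (1-x)^(2*m+1-k)) by ring]
    rw [Finset.mul_sum]
    refine Finset.sum_congr rfl (fun k hk => ?_)
    have hk' : k < m := Finset.mem_range.mp hk
    rw [hg]
    simp only []
    rw [show 2*m+3-(k+2) = 2*m+1-k by omega]
    ring
  have hsym : ((2*m+1).choose (m+1) : ℝ) = ((2*m+1).choose m : ℝ) := by
    norm_cast
    rw [← Nat.choose_symm (by omega : m+1 ≤ 2*m+1), show 2*m+1-(m+1) = m by omega]
  calc ∑ k ∈ range (m+2), ((2*m+3).choose k : ℝ) * (x^k * (1-x)^(2*m+3-k))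
      = ∑ k ∈ range (m+2), ((2*m+3).choose k : ℝ) * g k := rfl
    _ = _ := by rw [e1, e2, e3, hS0, hS1, hS2, hsym]; ring

lemma lemA_aux (m : ℕ) (x : ℝ) :
    (1-x)^(m+1) * ∑ n ∈ range (m+1), ((m+n).choose n : ℝ) * x^n
      = ∑ k ∈ range (m+1), ((2*m+1).choose k : ℝ) * (x^k * (1-x)^(2*m+1-k)) := by
  induction m with
  | zero => simp
  | succ m ih =>
    have key : (1-x)^(m+2) * ∑ n ∈ range (m+2), ((m+1+n).choose n : ℝ) * x^n
        = (1-x)^(m+1) * ((1-x) * ∑ n ∈ range (m+2), ((m+1+n).choose n : ℝ) * x^n) := by ring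
    rw [show m+1+1 = m+2 from rfl, key, step_left_aux, show 2*(m+1)+1 = 2*m+3 by ring,
      step_right_aux m x, ← ih]
    have hsym : ((2*m+1).choose (m+1) : ℝ) = ((2*m+1).choose m : ℝ) := by
      norm_cast
      rw [← Nat.choose_symm (by omega : m+1 ≤ 2*m+1), show 2*m+1-(m+1) = m by omega]
    have hdouble : ((2*m+2).choose (m+1) : ℝ) = 2 * ((2*m+1).choose m : ℝ) := by
      norm_cast
      rw [show 2*m+2 = (2*m+1)+1 from rfl, Nat.choose_succ_succ,
        ← Nat.choose_symm (by omega : m+1 ≤ 2*m+1), show 2*m+1-(m+1) = m by omega]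
      ring
    rw [hsym, hdouble]
    ring

lemma hockey_aux (m t : ℕ) : ∑ n ∈ range (t+1), (m+n).choose n = (m+t+1).choose t := by
  induction t with
  | zero => simp
  | succ t ih =>
    rw [Finset.sum_range_succ, ih]
    show (m+t+1).choose t + (m+t+1).choose (t+1) = ((m+t+1)+1).choose (t+1)
    exact (Nat.choose_succ_succ' (m+t+1) t).symm

theorem daubechies_polynomial_identity (L : ℕ) (hL : Even L) (hpos : 0 < L) (x : ℝ) :
    ∑ n ∈ Finset.range (L / 2), ((L / 2 - 1 + n).choose n : ℝ) * x ^ n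
      = ∑ k ∈ Finset.range (L / 2), ((L - 1).choose k : ℝ) * x ^ k * (1 - x) ^ (L / 2 - 1 - k) := by
  obtain ⟨c, rfl⟩ := hL
  obtain ⟨m, rfl⟩ : ∃ m, c = m + 1 := ⟨c - 1, by omega⟩
  have h2 : (m+1) + (m+1) = 2*m+2 := by ring
  rw [h2]
  have hdiv : (2*m+2)/2 = m+1 := by omega
  have hsub : (2*m+2) - 1 = 2*m+1 := by omega
  rw [hdiv, hsub]
  simp only [Nat.add_sub_cancel]
  -- goal: ∑ n ∈ range (m+1), C(m+n,n) x^n = ∑ k ∈ range (m+1), C(2m+1,k) x^k (1-x)^(m-k)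
  by_cases hx : x = 1
  · subst hx
    have hR : ∑ k ∈ range (m+1), ((2*m+1).choose k : ℝ) * 1 ^ k * (1 - 1) ^ (m - k)
        = ((2*m+1).choose m : ℝ) := by
      rw [Finset.sum_range_succ]
      simp only [sub_self, one_pow, mul_one, Nat.sub_self, pow_zero]
      rw [Finset.sum_eq_zero, zero_add]
      intro k hk
      have hk' : k < m := Finset.mem_range.mp hk
      rw [zero_pow (by omega : m - k ≠ 0)]
      ring
    rw [hR]
    have hL' : ∑ n ∈ range (m+1), ((m+n).choose n : ℝ) * 1 ^ n
        = ((∑ n ∈ range (m+1), (m+n).choose n : ℕ) : ℝ) := by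
      push_cast
      simp
    rw [hL', hockey_aux m m, show m+m+1 = 2*m+1 by ring]
  · have hne : (1 - x) ^ (m+1) ≠ 0 := pow_ne_zero _ (sub_ne_zero.mpr (Ne.symm hx))
    apply mul_left_cancel₀ hne
    rw [lemA_aux m x, Finset.mul_sum]
    refine (Finset.sum_congr rfl (fun k hk => ?_)).symm
    have hk' : k < m+1 := Finset.mem_range.mp hk
    rw [show 2*m+1-k = (m-k)+(m+1) by omega, pow_add]
    ring
end

section
/- The Daubechies polynomial p_{L/2} satisfies the Bézout identity (1−x)^{L/2} p_{L/2}(x) + x^{L/2} p_{L/2}(1−x) = 1 for all real x, for every even positive integer L. -/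
open Finset

private lemma daub_central (m : ℕ) :
    (2 * m + 2).choose (m + 1) = 2 * (2 * m + 1).choose (m + 1) := by
  have h : (2 * m + 2).choose (m + 1) =
      (2 * m + 1).choose m + (2 * m + 1).choose (m + 1) := by
    rw [show 2 * m + 2 = 2 * m + 1 + 1 by omega]
    exact Nat.choose_succ_succ _ _
  have hsymm : (2 * m + 1).choose m = (2 * m + 1).choose (m + 1) := by
    have h2 := Nat.choose_symm (n := 2 * m + 1) (k := m + 1) (by omega)
    have hd : 2 * m + 1 - (m + 1) = m := by omega
    rw [hd] at h2
    omega
  omega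

private lemma daub_key (m : ℕ) (x : ℝ) :
    (1 - x) * ∑ n ∈ Finset.range (m + 2), ((m + 1 + n).choose n : ℝ) * x ^ n
      = (∑ n ∈ Finset.range (m + 1), ((m + n).choose n : ℝ) * x ^ n)
        + ((2 * m + 1).choose (m + 1) : ℝ) * x ^ (m + 1) * (1 - 2 * x) := by
  set A := ∑ n ∈ Finset.range (m + 2), ((m + 1 + n).choose n : ℝ) * x ^ n with hA
  set S := ∑ n ∈ Finset.range (m + 1), ((m + n).choose n : ℝ) * x ^ n with hS
  have h1 : A = (∑ n ∈ Finset.range (m + 1), ((m + 1 + (n + 1)).choose (n + 1) : ℝ) * x ^ (n + 1))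
      + ((m + 1 + 0).choose 0 : ℝ) * x ^ 0 := by
    rw [hA, Finset.sum_range_succ']
  have h2 : ∀ n : ℕ, ((m + 1 + (n + 1)).choose (n + 1) : ℝ)
      = ((m + 1 + n).choose n : ℝ) + ((m + (n + 1)).choose (n + 1) : ℝ) := by
    intro n
    have heq : (m + 1 + (n + 1)).choose (n + 1)
        = (m + 1 + n).choose n + (m + (n + 1)).choose (n + 1) := by
      have hp := Nat.choose_succ_succ (m + 1 + n) n
      have e1 : m + 1 + (n + 1) = m + 1 + n + 1 := by omega
      have e2 : m + (n + 1) = m + 1 + n := by omega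
      rw [e1, e2, hp]
    rw [heq]
    push_cast
    ring
  have h3 : A = (∑ n ∈ Finset.range (m + 1), ((m + 1 + n).choose n : ℝ) * x ^ (n + 1))
      + (∑ n ∈ Finset.range (m + 1), ((m + (n + 1)).choose (n + 1) : ℝ) * x ^ (n + 1)) + 1 := by
    rw [h1]
    simp only [Nat.choose_zero_right, Nat.cast_one, pow_zero, mul_one]
    rw [← Finset.sum_add_distrib]
    congr 1
    apply Finset.sum_congr rfl
    intro n _
    rw [h2 n]; ring
  have h4 : ∑ n ∈ Finset.range (m + 1), ((m + 1 + n).choose n : ℝ) * x ^ (n + 1)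
      = x * (A - ((m + 1 + (m + 1)).choose (m + 1) : ℝ) * x ^ (m + 1)) := by
    have hsub : A - ((m + 1 + (m + 1)).choose (m + 1) : ℝ) * x ^ (m + 1)
        = ∑ n ∈ Finset.range (m + 1), ((m + 1 + n).choose n : ℝ) * x ^ n := by
      rw [hA, Finset.sum_range_succ]; ring
    rw [hsub, Finset.mul_sum]
    apply Finset.sum_congr rfl
    intro n _; ring
  have h5 : ∑ n ∈ Finset.range (m + 1), ((m + (n + 1)).choose (n + 1) : ℝ) * x ^ (n + 1)
      = S + ((m + (m + 1)).choose (m + 1) : ℝ) * x ^ (m + 1) - 1 := by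
    have hs := Finset.sum_range_succ' (fun n => ((m + n).choose n : ℝ) * x ^ n) (m + 1)
    have h6 : ∑ n ∈ Finset.range (m + 2), ((m + n).choose n : ℝ) * x ^ n
        = S + ((m + (m + 1)).choose (m + 1) : ℝ) * x ^ (m + 1) := by
      rw [hS, Finset.sum_range_succ]
    rw [h6] at hs
    simp only [Nat.add_zero, Nat.choose_zero_right, Nat.cast_one, pow_zero, mul_one] at hs
    linarith [hs]
  have hc1 : ((m + (m + 1)).choose (m + 1) : ℝ) = ((2 * m + 1).choose (m + 1) : ℝ) := by
    norm_cast
    congr 1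
    omega
  have hc2 : ((m + 1 + (m + 1)).choose (m + 1) : ℝ) = 2 * ((2 * m + 1).choose (m + 1) : ℝ) := by
    have he : (m + 1 + (m + 1)) = 2 * m + 2 := by omega
    rw [he, daub_central]
    push_cast
    ring
  rw [h4, h5, hc1, hc2] at h3
  linear_combination h3

private lemma daub_main (m : ℕ) (x : ℝ) :
    (1 - x) ^ (m + 1) * (∑ n ∈ Finset.range (m + 1), ((m + n).choose n : ℝ) * x ^ n)
      + x ^ (m + 1) * (∑ n ∈ Finset.range (m + 1), ((m + n).choose n : ℝ) * (1 - x) ^ n)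
      = 1 := by
  induction m with
  | zero => simp
  | succ m ih =>
    have h1 := daub_key m x
    have h2 := daub_key m (1 - x)
    rw [show (1 - (1 - x)) = x by ring] at h2
    have hre : (1 - x) ^ (m + 1 + 1)
          * (∑ n ∈ Finset.range (m + 1 + 1), ((m + 1 + n).choose n : ℝ) * x ^ n)
        + x ^ (m + 1 + 1)
          * (∑ n ∈ Finset.range (m + 1 + 1), ((m + 1 + n).choose n : ℝ) * (1 - x) ^ n)
        = (1 - x) ^ (m + 1)
            * ((1 - x) * ∑ n ∈ Finset.range (m + 2), ((m + 1 + n).choose n : ℝ) * x ^ n)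
          + x ^ (m + 1)
            * (x * ∑ n ∈ Finset.range (m + 2), ((m + 1 + n).choose n : ℝ) * (1 - x) ^ n) := by
      ring
    rw [hre, h1, h2]
    linear_combination ih

theorem daubechies_bezout_identity (L : ℕ) (hL : Even L) (hpos : 0 < L) (x : ℝ) :
    (1 - x) ^ (L / 2) * (∑ n ∈ Finset.range (L / 2), ((L / 2 - 1 + n).choose n : ℝ) * x ^ n)
      + x ^ (L / 2) * (∑ n ∈ Finset.range (L / 2), ((L / 2 - 1 + n).choose n : ℝ) * (1 - x) ^ n)
      = 1 := by
  obtain ⟨k, hk⟩ := hL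
  have hdiv : L / 2 = k := by omega
  have hk1 : 1 ≤ k := by omega
  obtain ⟨m, hm⟩ : ∃ m, k = m + 1 := ⟨k - 1, by omega⟩
  rw [hdiv, hm]
  simp only [Nat.add_sub_cancel]
  exact daub_main m x
end

section
/- Under the MODWT with quadrature mirror filters (|H̃(f)|² + |G̃(f)|² = 1 for all f), the energy of a time series X of length N decomposes over J levels: ‖X‖² = ∑_{j=1}^{J} ‖W̃_j‖² + ‖Ṽ_J‖², where W̃_j and Ṽ_j are the length-N vectors of level-j MODWT wavelet and scaling coefficients, defined by the cascade transfer functions H̃_j(f) = H̃(2^{j−1}f) ∏_{l=0}^{j−2} G̃(2^l f) and G̃_j(f) = ∏_{l=0}^{j−1} G̃(2^l f). -/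
/-!
Each MODWT coefficient vector is the series filtered circularly by a transfer function `A`, so by
Parseval's identity for the DFT its energy is `N⁻¹ ∑ₖ |A (k/N)|² |X̂ₖ|²`. The QMF condition gives
`|H̃ⱼ₊₁|² + |G̃ⱼ₊₁|² = |G̃ⱼ|²` pointwise, hence the squared transfer functions of the `J` wavelet
levels and of the last scaling level telescope to `|G̃₀|² = 1` at every frequency, and Parseval
applied to `X` itself gives `‖X‖²`.
-/

open Finset Complex

/-- Discrete Fourier transform of a finite sequence. -/
noncomputable def dft (N : ℕ) (X : Fin N → ℂ) (k : Fin N) : ℂ :=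
  ∑ i : Fin N, X i * Complex.exp (-2 * Real.pi * Complex.I * (i : ℕ) * (k : ℕ) / N)

/-- Inverse discrete Fourier transform. -/
noncomputable def idft (N : ℕ) (Y : Fin N → ℂ) (i : Fin N) : ℂ :=
  (N : ℂ)⁻¹ * ∑ k : Fin N, Y k * Complex.exp (2 * Real.pi * Complex.I * (i : ℕ) * (k : ℕ) / N)

/-- Level-`j` MODWT wavelet transfer function built by cascading the level-1
wavelet transfer function `H` and scaling transfer function `G`. -/
noncomputable def cascadeH (H G : ℝ → ℂ) (j : ℕ) (f : ℝ) : ℂ :=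
  H (2 ^ (j - 1) * f) * ∏ l ∈ Finset.range (j - 1), G (2 ^ l * f)

/-- Level-`j` MODWT scaling transfer function. -/
noncomputable def cascadeG (G : ℝ → ℂ) (j : ℕ) (f : ℝ) : ℂ :=
  ∏ l ∈ Finset.range j, G (2 ^ l * f)

/-- Level-`j` MODWT wavelet coefficients of `X`, obtained by circular filtering in
the frequency domain with the cascade transfer function `H̃ⱼ(k/N)`. -/
noncomputable def modwtW (N : ℕ) (H G : ℝ → ℂ) (j : ℕ) (X : Fin N → ℂ) (i : Fin N) : ℂ :=
  idft N (fun k => cascadeH H G j ((k : ℕ) / (N : ℝ)) * dft N X k) i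

/-- Level-`j` MODWT scaling coefficients of `X`. -/
noncomputable def modwtV (N : ℕ) (H G : ℝ → ℂ) (j : ℕ) (X : Fin N → ℂ) (i : Fin N) : ℂ :=
  idft N (fun k => cascadeG G j ((k : ℕ) / (N : ℝ)) * dft N X k) i

open ComplexConjugate

noncomputable def dftKernel (N : ℕ) (i k : Fin N) : ℂ :=
  exp (2 * Real.pi * I * (i : ℕ) * (k : ℕ) / N)

section DiscreteFourier

variable {N : ℕ}

lemma conj_dftKernel (i k : Fin N) :
    conj (dftKernel N i k) = exp (-(2 * Real.pi * I * (i : ℕ) * (k : ℕ) / N)) := by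
  rw [dftKernel, ← exp_conj]
  congr 1
  simp only [map_div₀, map_mul, map_ofNat, conj_ofReal, conj_I, map_natCast]
  ring

lemma dftKernel_comm (i k : Fin N) : dftKernel N i k = dftKernel N k i := by
  rw [dftKernel, dftKernel, mul_right_comm (2 * Real.pi * I : ℂ)]

lemma idft_eq_sum_dftKernel (Y : Fin N → ℂ) (i : Fin N) :
    idft N Y i = (N : ℂ)⁻¹ * ∑ k, Y k * dftKernel N i k := rfl

lemma dft_eq_sum_conj_dftKernel (X : Fin N → ℂ) (k : Fin N) :
    dft N X k = ∑ i, X i * conj (dftKernel N i k) := by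
  simp only [dft, conj_dftKernel, neg_div, neg_mul]

/-- For `k ≠ k'` the sum is a full geometric sum of the `N`-th root of unity `ζ ^ (k - k') ≠ 1`,
where `ζ = exp (2πi/N)`. -/
lemma sum_dftKernel_mul_conj (k k' : Fin N) :
    ∑ i, dftKernel N i k * conj (dftKernel N i k') = if k = k' then (N : ℂ) else 0 := by
  set ζ := exp (2 * Real.pi * I / N)
  have hζ : IsPrimitiveRoot ζ N := isPrimitiveRoot_exp N k.pos.ne'
  set r := ζ ^ ((k : ℕ) - (k' : ℕ) : ℤ)
  have hterm (i : Fin N) : dftKernel N i k * conj (dftKernel N i k') = r ^ (i : ℕ) := by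
    rw [conj_dftKernel, dftKernel, ← exp_add, ← zpow_natCast, ← zpow_mul, ← exp_int_mul]
    congr 1
    push_cast
    ring
  simp only [hterm]
  rw [Fin.sum_univ_eq_sum_range (r ^ ·)]
  split_ifs with hkk
  · simp [r, hkk]
  · have hr : r ≠ 1 := by
      rw [Ne, hζ.zpow_eq_one_iff_dvd]
      intro hdvd
      have := Int.eq_zero_of_abs_lt_dvd hdvd (abs_sub_lt_of_nonneg_of_lt (by positivity)
        (by exact_mod_cast k.isLt) (by positivity) (by exact_mod_cast k'.isLt))
      exact hkk (Fin.ext (by omega))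
    have hrN : r ^ N = 1 := by
      rw [← zpow_natCast, ← zpow_mul, mul_comm, zpow_mul, zpow_natCast, hζ.pow_eq_one, one_zpow]
    rw [geom_sum_eq hr, hrN, sub_self, zero_div]

theorem idft_dft (X : Fin N → ℂ) : idft N (dft N X) = X := by
  funext i
  have hN : (N : ℂ) ≠ 0 := Nat.cast_ne_zero.mpr i.pos.ne'
  have hswap : ∑ k, dft N X k * dftKernel N i k
      = ∑ m, X m * ∑ k, dftKernel N k i * conj (dftKernel N k m) := by
    simp only [dft_eq_sum_conj_dftKernel, sum_mul, mul_sum]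
    rw [sum_comm]
    refine sum_congr rfl fun m _ => sum_congr rfl fun k _ => ?_
    rw [dftKernel_comm m k, dftKernel_comm i k]
    ring
  rw [idft_eq_sum_dftKernel, hswap]
  simp only [sum_dftKernel_mul_conj, mul_ite, mul_zero, sum_ite_eq, mem_univ, if_true]
  field_simp

theorem sum_idft_mul_conj_idft (Y Z : Fin N → ℂ) :
    ∑ i, idft N Y i * conj (idft N Z i) = (N : ℂ)⁻¹ * ∑ k, Y k * conj (Z k) := by
  have hexpand (i : Fin N) : idft N Y i * conj (idft N Z i)
      = (N : ℂ)⁻¹ * (N : ℂ)⁻¹ * ∑ k, ∑ k', Y k * conj (Z k')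
          * (dftKernel N i k * conj (dftKernel N i k')) := by
    simp only [idft_eq_sum_dftKernel, map_mul, map_sum, map_inv₀, map_natCast]
    rw [mul_mul_mul_comm, sum_mul_sum]
    congr 1
    refine sum_congr rfl fun k _ => sum_congr rfl fun k' _ => ?_
    ring
  calc ∑ i, idft N Y i * conj (idft N Z i)
      = (N : ℂ)⁻¹ * (N : ℂ)⁻¹ * ∑ k, ∑ k', Y k * conj (Z k')
          * ∑ i, dftKernel N i k * conj (dftKernel N i k') := by
        rw [sum_congr rfl fun i _ => hexpand i, ← mul_sum, sum_comm]
        congr 1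
        refine sum_congr rfl fun k _ => ?_
        rw [sum_comm]
        exact sum_congr rfl fun k' _ => (mul_sum _ _ _).symm
    _ = (N : ℂ)⁻¹ * ∑ k, Y k * conj (Z k) := by
        simp only [sum_dftKernel_mul_conj, mul_ite, mul_zero, sum_ite_eq, mem_univ, if_true]
        rw [mul_sum, mul_sum]
        refine sum_congr rfl fun k _ => ?_
        have hN : (N : ℂ) ≠ 0 := Nat.cast_ne_zero.mpr k.pos.ne'
        field_simp

theorem sum_norm_sq_idft (Y : Fin N → ℂ) :
    ∑ i, ‖idft N Y i‖ ^ 2 = (N : ℝ)⁻¹ * ∑ k, ‖Y k‖ ^ 2 := by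
  apply Complex.ofReal_injective
  push_cast
  simp only [← mul_conj']
  exact sum_idft_mul_conj_idft Y Y

theorem sum_norm_sq_eq_inv_mul_sum_norm_sq_dft (X : Fin N → ℂ) :
    ∑ i, ‖X i‖ ^ 2 = (N : ℝ)⁻¹ * ∑ k, ‖dft N X k‖ ^ 2 := by
  conv_lhs => rw [← idft_dft X]
  exact sum_norm_sq_idft (dft N X)

lemma sum_norm_sq_idft_mul_dft (A X : Fin N → ℂ) :
    ∑ i, ‖idft N (fun k => A k * dft N X k) i‖ ^ 2
      = (N : ℝ)⁻¹ * ∑ k, ‖A k‖ ^ 2 * ‖dft N X k‖ ^ 2 := by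
  simp only [sum_norm_sq_idft, norm_mul, mul_pow]

end DiscreteFourier

lemma norm_sq_cascadeH_add_norm_sq_cascadeG {H G : ℝ → ℂ}
    (hqmf : ∀ f : ℝ, ‖H f‖ ^ 2 + ‖G f‖ ^ 2 = 1) (j : ℕ) (f : ℝ) :
    ‖cascadeH H G (j + 1) f‖ ^ 2 + ‖cascadeG G (j + 1) f‖ ^ 2 = ‖cascadeG G j f‖ ^ 2 := by
  simp only [cascadeH, cascadeG, Nat.add_sub_cancel, prod_range_succ, norm_mul, mul_pow]
  linear_combination ‖∏ l ∈ range j, G (2 ^ l * f)‖ ^ 2 * hqmf (2 ^ j * f)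

lemma sum_norm_sq_cascadeH_add_norm_sq_cascadeG {H G : ℝ → ℂ}
    (hqmf : ∀ f : ℝ, ‖H f‖ ^ 2 + ‖G f‖ ^ 2 = 1) (J : ℕ) (f : ℝ) :
    ∑ j ∈ Icc 1 J, ‖cascadeH H G j f‖ ^ 2 + ‖cascadeG G J f‖ ^ 2 = 1 := by
  induction J with
  | zero => simp [cascadeG]
  | succ J ih =>
    rw [sum_Icc_succ_top (Nat.le_add_left 1 J), add_assoc,
      norm_sq_cascadeH_add_norm_sq_cascadeG hqmf, ih]

theorem modwt_energy_decomposition_general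
    (N : ℕ) (X : Fin N → ℂ) (H G : ℝ → ℂ)
    (hqmf : ∀ f : ℝ, ‖H f‖ ^ 2 + ‖G f‖ ^ 2 = 1)
    (J : ℕ) :
    (∑ j ∈ Finset.Icc 1 J, ∑ i : Fin N, ‖modwtW N H G j X i‖ ^ 2)
      + (∑ i : Fin N, ‖modwtV N H G J X i‖ ^ 2)
      = ∑ i : Fin N, ‖X i‖ ^ 2 := by
  simp only [modwtW, modwtV, sum_norm_sq_idft_mul_dft]
  rw [← mul_sum, ← mul_add, sum_comm, ← sum_add_distrib,
    sum_norm_sq_eq_inv_mul_sum_norm_sq_dft X]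
  congr 1
  refine sum_congr rfl fun k _ => ?_
  rw [← sum_mul, ← add_mul, sum_norm_sq_cascadeH_add_norm_sq_cascadeG hqmf, one_mul]

theorem modwt_energy_decomposition
    (N : ℕ) (hN : 0 < N) (X : Fin N → ℂ) (H G : ℝ → ℂ)
    (hqmf : ∀ f : ℝ, ‖H f‖ ^ 2 + ‖G f‖ ^ 2 = 1)
    (J : ℕ) (hJ : 1 ≤ J) :
    (∑ j ∈ Finset.Icc 1 J, ∑ i : Fin N, ‖modwtW N H G j X i‖ ^ 2)
      + (∑ i : Fin N, ‖modwtV N H G J X i‖ ^ 2)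
      = ∑ i : Fin N, ‖X i‖ ^ 2 :=
  modwt_energy_decomposition_general N X H G hqmf J
end
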